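/- arXiv:2208.14797 — 2 statements merged into one kernel-verified Lean document; each statement's English description precedes it below -/
import Mathlib

section
/- Martingale increment bounds: Let k ≥ 1 and X be a k-homogeneous point process on {1,…,m} that is ℓ∞-independent with parameter d_inf, with density ν_X(i) = Pr(i ∈ X)/k. Let Y_1,…,Y_m be d×d Hermitian with 0 ⪯ Y_i ⪯ rI, let e satisfy Pr(e ∈ X) > 0, and set Z_e = E_{X_e}[Y_e + Σ_{i∈X_e} Y_i] − E_X[Σ_{i∈X} Y_i]. Then: (i) |Z_e| ⪯ r·d_inf·I, where |·| is the matrix absolute value; and (ii) E_{e∼ν_X}[Z_e²] ⪯ r·d_inf²·E_{e∼ν_X}[Y_e]. -/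
open Matrix Finset
open scoped Classical ComplexOrder

/-- Intensity of a point process: `ρ_X(i) = Pr(i ∈ X)`. -/
noncomputable def intensity {α : Type*} [Fintype α] [DecidableEq α]
    (μ : Finset α → ℝ) (i : α) : ℝ :=
  ∑ F ∈ Finset.univ.filter (fun F => i ∈ F), μ F

/-- Normalizing constant of the reduced process `X_{A1}^{A0}`. -/
noncomputable def redNorm {α : Type*} [Fintype α] [DecidableEq α]
    (μ : Finset α → ℝ) (A0 A1 : Finset α) : ℝ :=
  ∑ B ∈ Finset.univ.filter (fun B => Disjoint B (A0 ∪ A1)), μ (A1 ∪ B)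

/-- The reduced process `X_{A1}^{A0}` obtained from `μ` by excluding `A0` and
including `A1`: its law on subsets `B` of the complement of `A0 ∪ A1` is
proportional to `μ (A1 ∪ B)`. -/
noncomputable def reduced {α : Type*} [Fintype α] [DecidableEq α]
    (μ : Finset α → ℝ) (A0 A1 : Finset α) : Finset α → ℝ :=
  fun B => if Disjoint B (A0 ∪ A1) then μ (A1 ∪ B) / redNorm μ A0 A1 else 0

/-- `δ_{X,e}(i) = 1 - ρ_X(e)` if `i = e`, and `ρ_{X_e}(i) - ρ_X(i)` otherwise. -/
noncomputable def deltaPP {α : Type*} [Fintype α] [DecidableEq α]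
    (μ : Finset α → ℝ) (e i : α) : ℝ :=
  if i = e then 1 - intensity μ e else intensity (reduced μ ∅ {e}) i - intensity μ i

/-- A point process is `k`-homogeneous if all its samples have cardinality `k`. -/
def IsHomogeneous {α : Type*} (μ : Finset α → ℝ) (k : ℕ) : Prop :=
  ∀ F, μ F ≠ 0 → F.card = k

/-- `ℓ∞`-independence with parameter `dinf`: for all disjoint `A0, A1` such that the
reduced process `Y = X_{A1}^{A0}` exists, and all `e` in the support of the intensity
of `Y`, the total variation `∑_{i ∈ supp ρ_Y} |δ_{Y,e}(i)|` is at most `dinf`. -/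
def LinftyIndep {α : Type*} [Fintype α] [DecidableEq α]
    (μ : Finset α → ℝ) (dinf : ℝ) : Prop :=
  ∀ A0 A1 : Finset α, Disjoint A0 A1 → redNorm μ A0 A1 ≠ 0 →
    ∀ e : α, intensity (reduced μ A0 A1) e ≠ 0 →
      ∑ i ∈ Finset.univ.filter (fun i => intensity (reduced μ A0 A1) i ≠ 0),
        |deltaPP (reduced μ A0 A1) e i| ≤ dinf

/-- Matrix absolute value `|A| = (A*A)^{1/2}`. -/
noncomputable def matrixAbs {d : ℕ} (A : Matrix (Fin d) (Fin d) ℂ) :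
    Matrix (Fin d) (Fin d) ℂ :=
  (Matrix.posSemidef_conjTranspose_mul_self A).1.eigenvectorUnitary.1 *
    diagonal ((↑) ∘ (√·) ∘ (Matrix.posSemidef_conjTranspose_mul_self A).1.eigenvalues) *
    (star (Matrix.posSemidef_conjTranspose_mul_self A).1.eigenvectorUnitary : Matrix (Fin d) (Fin d) ℂ)

/-!
Both increments are linear in the `Y i`: `Z f = ∑ i, δ_f(i) • Y i`. Since `0 ⪯ Y i ⪯ r • 1` and
`ℓ∞`-independence at the root gives `∑ i, |δ_f(i)| ≤ dinf`, we get `± Z e ⪯ (r * dinf) • 1`, and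
the spectral theorem turns this into `|Z e| ⪯ (r * dinf) • 1`. For the second bound, the operator
Cauchy–Schwarz inequality and `Y i ^ 2 ⪯ r • Y i` give `Z f ^ 2 ⪯ (dinf * r) • ∑ i, |δ_f(i)| • Y i`.
Averaging over `f ∼ ν`, the symmetry `ρ(f) δ_f(i) = ρ(i) δ_i(f)` (both sides equal
`Pr(f, i ∈ X) - ρ(f) ρ(i)`) bounds the column sums `∑ f, ν(f) |δ_f(i)|` by `dinf * ν(i)`.
-/

open scoped MatrixOrder

namespace Matrix

variable {𝕜 n ι : Type*} [RCLike 𝕜] [Fintype n] [DecidableEq n]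

lemma mul_self_le_smul_of_le_smul_one {Y : Matrix n n 𝕜} {r : ℝ} (hY : 0 ≤ Y)
    (hYr : Y ≤ r • 1) : Y * Y ≤ r • Y := by
  set S := CFC.sqrt Y
  have hSS : S * S = Y := CFC.sqrt_mul_sqrt_self Y
  calc Y * Y = S * Y * S := by rw [← hSS]; noncomm_ring
    _ ≤ S * (r • 1) * S := conjugate_le_conjugate_of_nonneg hYr (CFC.sqrt_nonneg Y)
    _ = r • Y := by rw [mul_smul_comm, smul_mul_assoc, mul_one, hSS]

lemma smul_le_abs_smul_smul_one {Y : Matrix n n 𝕜} {r : ℝ} (hY : 0 ≤ Y)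
    (hYr : Y ≤ r • 1) (c : ℝ) : c • Y ≤ (|c| * r) • 1 :=
  calc c • Y ≤ |c| • Y := smul_le_smul_of_nonneg_right (le_abs_self c) hY
    _ ≤ |c| • r • 1 := smul_le_smul_of_nonneg_left hYr (abs_nonneg c)
    _ = (|c| * r) • 1 := smul_smul _ _ _

lemma sum_smul_le_smul_one (s : Finset ι) {Y : ι → Matrix n n 𝕜} {r t : ℝ}
    (hr : 0 ≤ r) (hY : ∀ i ∈ s, 0 ≤ Y i) (hYr : ∀ i ∈ s, Y i ≤ r • 1) {c : ι → ℝ}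
    (hc : ∑ i ∈ s, |c i| ≤ t) : ∑ i ∈ s, c i • Y i ≤ (r * t) • 1 :=
  calc ∑ i ∈ s, c i • Y i ≤ ∑ i ∈ s, (|c i| * r) • (1 : Matrix n n 𝕜) :=
        sum_le_sum fun i hi => smul_le_abs_smul_smul_one (hY i hi) (hYr i hi) (c i)
    _ = ((∑ i ∈ s, |c i|) * r) • 1 := by rw [← sum_smul, sum_mul]
    _ ≤ (r * t) • 1 := by
        rw [mul_comm]
        exact smul_le_smul_of_nonneg_right (mul_le_mul_of_nonneg_left hc hr) zero_le_one

lemma cfcAbs_le_smul_one {A : Matrix n n 𝕜} (hA : IsSelfAdjoint A) {c : ℝ}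
    (h₁ : A ≤ c • 1) (h₂ : -A ≤ c • 1) : CFC.abs A ≤ c • 1 := by
  rw [← Algebra.algebraMap_eq_smul_one] at h₁ h₂ ⊢
  rw [le_algebraMap_iff_spectrum_le hA] at h₁
  rw [le_algebraMap_iff_spectrum_le hA.neg, ← spectrum.neg_eq] at h₂
  rw [le_algebraMap_iff_spectrum_le (CFC.abs_nonneg A).isSelfAdjoint, CFC.spectrum_abs A hA]
  rintro _ ⟨x, hx, rfl⟩
  exact abs_le.2 ⟨by linarith [h₂ (-x) (by simpa using hx)], h₁ x hx⟩

lemma smul_mul_add_mul_le_abs_smul {A B : Matrix n n 𝕜} (hA : IsSelfAdjoint A)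
    (hB : IsSelfAdjoint B) (c : ℝ) : c • (A * B + B * A) ≤ |c| • (A * A + B * B) := by
  have hsub : A * B + B * A ≤ A * A + B * B := by
    have h := star_mul_self_nonneg (A - B)
    rw [star_sub, hA.star_eq, hB.star_eq] at h
    rw [← sub_nonneg]; convert h using 1; noncomm_ring
  have hadd : -(A * B + B * A) ≤ A * A + B * B := by
    have h := star_mul_self_nonneg (A + B)
    rw [star_add, hA.star_eq, hB.star_eq] at h
    rw [← sub_nonneg]; convert h using 1; noncomm_ring
  rcases le_total 0 c with hc | hc
  · rw [abs_of_nonneg hc]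
    exact smul_le_smul_of_nonneg_left hsub hc
  · rw [abs_of_nonpos hc, ← neg_smul_neg]
    exact smul_le_smul_of_nonneg_left hadd (neg_nonneg.2 hc)

lemma sum_smul_mul_sum_smul_le (s : Finset ι) (c : ι → ℝ) {A : ι → Matrix n n 𝕜}
    (hA : ∀ i ∈ s, IsSelfAdjoint (A i)) :
    (∑ i ∈ s, c i • A i) * (∑ i ∈ s, c i • A i) ≤
      (∑ i ∈ s, |c i|) • ∑ i ∈ s, |c i| • (A i * A i) := by
  have hsq : (∑ i ∈ s, c i • A i) * (∑ i ∈ s, c i • A i) =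
      ∑ i ∈ s, ∑ j ∈ s, (c i * c j) • (A i * A j) := by
    rw [sum_mul_sum]
    exact sum_congr rfl fun i _ => sum_congr rfl fun j _ => smul_mul_smul_comm _ _ _ _
  refine le_of_smul_le_smul_left (a := (2 : ℝ)) ?_ two_pos
  calc (2 : ℝ) • ((∑ i ∈ s, c i • A i) * (∑ i ∈ s, c i • A i))
      = ∑ i ∈ s, ∑ j ∈ s, (c i * c j) • (A i * A j + A j * A i) := by
        rw [two_smul, hsq]
        simp only [smul_add, sum_add_distrib]
        congr 1
        rw [sum_comm]
        simp only [mul_comm]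
    _ ≤ ∑ i ∈ s, ∑ j ∈ s, |c i * c j| • (A i * A i + A j * A j) :=
        sum_le_sum fun i hi => sum_le_sum fun j hj =>
          smul_mul_add_mul_le_abs_smul (hA i hi) (hA j hj) _
    _ = (2 : ℝ) • ((∑ i ∈ s, |c i|) • ∑ i ∈ s, |c i| • (A i * A i)) := by
        simp only [abs_mul, smul_add, sum_add_distrib]
        rw [sum_comm (f := fun i j => (|c i| * |c j|) • (A j * A j))]
        simp only [mul_comm |c _| |c _|]
        rw [sum_smul_sum, sum_comm, two_smul]
        simp only [smul_smul, mul_comm]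

lemma cfcAbs_sum_smul_le (s : Finset ι) {Y : ι → Matrix n n 𝕜} {r t : ℝ} (hr : 0 ≤ r)
    (hY : ∀ i ∈ s, 0 ≤ Y i) (hYr : ∀ i ∈ s, Y i ≤ r • 1) {c : ι → ℝ}
    (hc : ∑ i ∈ s, |c i| ≤ t) : CFC.abs (∑ i ∈ s, c i • Y i) ≤ (r * t) • 1 := by
  refine cfcAbs_le_smul_one ?_ (sum_smul_le_smul_one s hr hY hYr hc) ?_
  · exact isSelfAdjoint_sum s fun i hi => (IsSelfAdjoint.all (c i)).smul (hY i hi).isSelfAdjoint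
  · simpa only [← sum_neg_distrib, ← neg_smul, abs_neg] using
      sum_smul_le_smul_one s hr hY hYr (c := fun i => -c i) (by simpa only [abs_neg] using hc)

lemma sum_smul_mul_self_le (s : Finset ι) {Y : ι → Matrix n n 𝕜} {r : ℝ} (hr : 0 ≤ r)
    (hY : ∀ i ∈ s, 0 ≤ Y i) (hYr : ∀ i ∈ s, Y i ≤ r • 1) {w : ι → ℝ} (hw : ∀ f ∈ s, 0 ≤ w f)
    {c : ι → ι → ℝ} {D : ℝ} (hD : 0 ≤ D) (hrow : ∀ f ∈ s, w f ≠ 0 → ∑ i ∈ s, |c f i| ≤ D)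
    (hcol : ∀ i ∈ s, ∑ f ∈ s, w f * |c f i| ≤ D * w i) {Z : ι → Matrix n n 𝕜}
    (hZ : ∀ f ∈ s, w f ≠ 0 → Z f = ∑ i ∈ s, c f i • Y i) :
    ∑ f ∈ s, w f • (Z f * Z f) ≤ (r * D ^ 2) • ∑ i ∈ s, w i • Y i := by
  have hZsq (f : ι) (hf : f ∈ s) :
      w f • (Z f * Z f) ≤ w f • (D • ∑ i ∈ s, |c f i| • (r • Y i)) := by
    obtain hwf | hwf := eq_or_ne (w f) 0
    · simp [hwf]
    refine smul_le_smul_of_nonneg_left ?_ (hw f hf)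
    rw [hZ f hf hwf]
    calc (∑ i ∈ s, c f i • Y i) * (∑ i ∈ s, c f i • Y i)
        ≤ (∑ i ∈ s, |c f i|) • ∑ i ∈ s, |c f i| • (Y i * Y i) :=
          sum_smul_mul_sum_smul_le s (c f) fun i hi => (hY i hi).isSelfAdjoint
      _ ≤ D • ∑ i ∈ s, |c f i| • (Y i * Y i) :=
          smul_le_smul_of_nonneg_right (hrow f hf hwf) <| sum_nonneg fun i hi =>
            smul_nonneg (abs_nonneg _) (hY i hi).isSelfAdjoint.mul_self_nonneg
      _ ≤ D • ∑ i ∈ s, |c f i| • (r • Y i) :=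
          smul_le_smul_of_nonneg_left (sum_le_sum fun i hi => smul_le_smul_of_nonneg_left
            (mul_self_le_smul_of_le_smul_one (hY i hi) (hYr i hi)) (abs_nonneg _)) hD
  calc ∑ f ∈ s, w f • (Z f * Z f)
      ≤ ∑ f ∈ s, w f • (D • ∑ i ∈ s, |c f i| • (r • Y i)) := sum_le_sum hZsq
    _ = (r * D) • ∑ i ∈ s, (∑ f ∈ s, w f * |c f i|) • Y i := by
        simp only [smul_sum, sum_smul, smul_smul]
        rw [sum_comm]
        refine sum_congr rfl fun i _ => sum_congr rfl fun f _ => ?_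
        ring_nf
    _ ≤ (r * D) • ∑ i ∈ s, (D * w i) • Y i :=
        smul_le_smul_of_nonneg_left (sum_le_sum fun i hi =>
          smul_le_smul_of_nonneg_right (hcol i hi) (hY i hi)) (mul_nonneg hr hD)
    _ = (r * D ^ 2) • ∑ i ∈ s, w i • Y i := by
        simp only [smul_sum, smul_smul]
        refine sum_congr rfl fun i _ => ?_
        ring_nf

end Matrix

lemma matrixAbs_eq_cfcAbs {d : ℕ} (A : Matrix (Fin d) (Fin d) ℂ) :
    matrixAbs A = CFC.abs A := by
  rw [CFC.abs, star_eq_conjTranspose,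
    CFC.sqrt_eq_real_sqrt _ (posSemidef_conjTranspose_mul_self A).nonneg,
    cfcₙ_eq_cfc (hf0 := Real.sqrt_zero), (posSemidef_conjTranspose_mul_self A).1.cfc_eq,
    IsHermitian.cfc, Unitary.conjStarAlgAut_apply]
  rfl

section PointProcess

variable {α : Type*} [Fintype α] [DecidableEq α] {μ : Finset α → ℝ}

lemma intensity_nonneg (hμ0 : ∀ F, 0 ≤ μ F) (i : α) : 0 ≤ intensity μ i :=
  sum_nonneg fun F _ => hμ0 F

lemma sum_smul_sum_eq_sum_intensity_smul {M : Type*} [AddCommMonoid M] [Module ℝ M]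
    (ν : Finset α → ℝ) (Y : α → M) :
    ∑ B, ν B • ∑ i ∈ B, Y i = ∑ i, intensity ν i • Y i := by
  simp only [intensity, sum_smul, smul_sum]
  exact sum_comm' (by simp)

lemma sum_filter_disjoint_singleton {β : Type*} [AddCommMonoid β] (f : α)
    (h : Finset α → β) :
    ∑ B ∈ univ.filter (fun B => Disjoint B {f}), h ({f} ∪ B) =
      ∑ F ∈ univ.filter (fun F => f ∈ F), h F := by
  refine sum_nbij' (insert f) (fun F => F.erase f) ?_ ?_ ?_ ?_ ?_ <;>
    simp +contextual [insert_erase]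

lemma redNorm_empty_singleton (μ : Finset α → ℝ) (f : α) :
    redNorm μ ∅ {f} = intensity μ f := by
  simpa only [redNorm, intensity, empty_union] using sum_filter_disjoint_singleton f μ

lemma sum_reduced_empty_singleton {f : α} (hf : intensity μ f ≠ 0) :
    ∑ B, reduced μ ∅ {f} B = 1 := by
  unfold reduced
  rw [← sum_filter, ← sum_div]
  exact div_self (a := redNorm μ ∅ {f}) (by rwa [redNorm_empty_singleton])

lemma intensity_reduced_empty_singleton_self (μ : Finset α → ℝ) (f : α) :
    intensity (reduced μ ∅ {f}) f = 0 :=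
  sum_eq_zero fun B hB => if_neg (by simpa using hB)

lemma intensity_reduced_empty_singleton_eq_zero (hμ0 : ∀ F, 0 ≤ μ F) (f : α) {i : α}
    (hi : intensity μ i = 0) : intensity (reduced μ ∅ {f}) i = 0 := by
  have hμi := (sum_eq_zero_iff_of_nonneg fun F _ => hμ0 F).1 hi
  refine sum_eq_zero fun B hB => ?_
  rw [reduced, hμi _ (by simpa using mem_union_right {f} (mem_filter.1 hB).2)]
  simp

lemma deltaPP_eq_zero (hμ0 : ∀ F, 0 ≤ μ F) {f i : α} (hf : intensity μ f ≠ 0)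
    (hi : intensity μ i = 0) : deltaPP μ f i = 0 := by
  have hif : i ≠ f := fun h => hf (h ▸ hi)
  rw [deltaPP, if_neg hif, intensity_reduced_empty_singleton_eq_zero hμ0 f hi, hi, sub_zero]

lemma intensity_mul_intensity_reduced_empty_singleton {f i : α} (hif : i ≠ f)
    (hf : intensity μ f ≠ 0) :
    intensity μ f * intensity (reduced μ ∅ {f}) i =
      ∑ F ∈ univ.filter (fun F => f ∈ F ∧ i ∈ F), μ F := by
  have hred (B : Finset α) : intensity μ f * reduced μ ∅ {f} B =
      if Disjoint B {f} then μ ({f} ∪ B) else 0 := by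
    rw [reduced, redNorm_empty_singleton, empty_union]
    split_ifs
    · field_simp
    · rw [mul_zero]
  calc intensity μ f * intensity (reduced μ ∅ {f}) i
      = ∑ B ∈ univ.filter (fun B => Disjoint B {f}),
          if i ∈ {f} ∪ B then μ ({f} ∪ B) else 0 := by
        nth_rw 2 [intensity]
        rw [mul_sum]
        simp only [hred, sum_filter, mem_union, mem_singleton, hif, false_or, ← ite_and, and_comm]
    _ = ∑ F ∈ univ.filter (fun F => f ∈ F), if i ∈ F then μ F else 0 :=
        sum_filter_disjoint_singleton f fun F => if i ∈ F then μ F else 0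
    _ = ∑ F ∈ univ.filter (fun F => f ∈ F ∧ i ∈ F), μ F := by
        rw [← sum_filter, filter_filter]

lemma intensity_mul_deltaPP_comm {f i : α} (hf : intensity μ f ≠ 0) (hi : intensity μ i ≠ 0) :
    intensity μ f * deltaPP μ f i = intensity μ i * deltaPP μ i f := by
  obtain rfl | hif := eq_or_ne i f
  · rfl
  rw [deltaPP, deltaPP, if_neg hif, if_neg hif.symm, mul_sub, mul_sub,
    intensity_mul_intensity_reduced_empty_singleton hif hf,
    intensity_mul_intensity_reduced_empty_singleton hif.symm hi, mul_comm (intensity μ f)]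
  simp only [and_comm]

lemma reduced_empty_empty (hμ1 : ∑ F, μ F = 1) : reduced μ ∅ ∅ = μ := by
  funext B
  simp [reduced, redNorm, hμ1]

lemma sum_abs_deltaPP_le (hμ0 : ∀ F, 0 ≤ μ F) (hμ1 : ∑ F, μ F = 1) {dinf : ℝ}
    (hind : LinftyIndep μ dinf) {f : α} (hf : intensity μ f ≠ 0) :
    ∑ i, |deltaPP μ f i| ≤ dinf := by
  have h := hind ∅ ∅ (disjoint_empty_left _) (by simp [redNorm, hμ1]) f
    (by rwa [reduced_empty_empty hμ1])
  rw [reduced_empty_empty hμ1] at h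
  refine le_of_eq_of_le (sum_filter_of_ne fun i _ hδ hi => ?_).symm h
  rw [deltaPP_eq_zero hμ0 hf hi, abs_zero] at hδ
  exact hδ rfl

lemma sum_intensity_mul_abs_deltaPP_le (hμ0 : ∀ F, 0 ≤ μ F) (hμ1 : ∑ F, μ F = 1) {dinf : ℝ}
    (hind : LinftyIndep μ dinf) (i : α) :
    ∑ f, intensity μ f * |deltaPP μ f i| ≤ dinf * intensity μ i := by
  by_cases hi : intensity μ i = 0
  · rw [hi, mul_zero]
    refine (sum_eq_zero fun f _ => ?_).le
    by_cases hf : intensity μ f = 0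
    · rw [hf, zero_mul]
    · rw [deltaPP_eq_zero hμ0 hf hi, abs_zero, mul_zero]
  have hsymm (f : α) : intensity μ f * |deltaPP μ f i| = intensity μ i * |deltaPP μ i f| := by
    by_cases hf : intensity μ f = 0
    · rw [hf, zero_mul, deltaPP_eq_zero hμ0 hi hf, abs_zero, mul_zero]
    · simpa only [abs_mul, abs_of_nonneg (intensity_nonneg hμ0 _)] using
        congrArg abs (intensity_mul_deltaPP_comm hf hi)
  rw [sum_congr rfl fun f _ => hsymm f, ← mul_sum, mul_comm dinf]
  exact mul_le_mul_of_nonneg_left (sum_abs_deltaPP_le hμ0 hμ1 hind hi) (intensity_nonneg hμ0 i)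

lemma deltaPP_eq (μ : Finset α → ℝ) (f i : α) :
    deltaPP μ f i = intensity (reduced μ ∅ {f}) i - intensity μ i + if i = f then 1 else 0 := by
  rw [deltaPP]
  split_ifs with hif
  · rw [hif, intensity_reduced_empty_singleton_self]; ring
  · rw [add_zero]

lemma sum_reduced_smul_sub_sum_smul {M : Type*} [AddCommGroup M] [Module ℝ M] {f : α}
    (hf : intensity μ f ≠ 0) (Y : α → M) :
    (∑ B, reduced μ ∅ {f} B • (Y f + ∑ i ∈ B, Y i)) - ∑ F, μ F • ∑ i ∈ F, Y i =
      ∑ i, deltaPP μ f i • Y i := by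
  simp only [smul_add, sum_add_distrib, ← sum_smul, sum_reduced_empty_singleton hf, one_smul,
    sum_smul_sum_eq_sum_intensity_smul, deltaPP_eq, add_smul, sub_smul, sum_sub_distrib,
    ite_smul, zero_smul, sum_ite_eq', mem_univ, if_true]
  abel

end PointProcess

theorem martingale_increment_bounds_general
    {m d : ℕ} (μ : Finset (Fin m) → ℝ) (hμ0 : ∀ F, 0 ≤ μ F) (hμ1 : ∑ F, μ F = 1)
    (k : ℕ)
    (dinf : ℝ) (hind : LinftyIndep μ dinf)
    (Y : Fin m → Matrix (Fin d) (Fin d) ℂ) (r : ℝ) (hr : 0 < r)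
    (hY0 : ∀ i, (Y i).PosSemidef)
    (hYr : ∀ i, ((r : ℂ) • (1 : Matrix (Fin d) (Fin d) ℂ) - Y i).PosSemidef)
    (e : Fin m) (he : intensity μ e ≠ 0)
    (Z : Fin m → Matrix (Fin d) (Fin d) ℂ)
    (hZ : ∀ f, intensity μ f ≠ 0 →
      Z f = (∑ B : Finset (Fin m), reduced μ ∅ {f} B • (Y f + ∑ i ∈ B, Y i))
              - ∑ F : Finset (Fin m), μ F • ∑ i ∈ F, Y i) :
    ((r * dinf) • (1 : Matrix (Fin d) (Fin d) ℂ) - matrixAbs (Z e)).PosSemidef ∧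
    ((r * dinf ^ 2) • (∑ f : Fin m, (intensity μ f / k) • Y f)
        - ∑ f : Fin m, (intensity μ f / k) • (Z f * Z f)).PosSemidef := by
  have hrow (f) (hf : intensity μ f ≠ 0) : ∑ i, |deltaPP μ f i| ≤ dinf :=
    sum_abs_deltaPP_le hμ0 hμ1 hind hf
  have hZδ (f) (hf : intensity μ f ≠ 0) : Z f = ∑ i, deltaPP μ f i • Y i :=
    (hZ f hf).trans (sum_reduced_smul_sub_sum_smul hf Y)
  have hY : ∀ i ∈ univ, 0 ≤ Y i := fun i _ => (hY0 i).nonneg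
  have hYr' : ∀ i ∈ univ, Y i ≤ r • 1 := fun i _ => by
    simpa only [Matrix.le_iff, Complex.coe_smul] using hYr i
  refine ⟨?_, ?_⟩
  · rw [← Matrix.le_iff, matrixAbs_eq_cfcAbs, hZδ e he]
    exact cfcAbs_sum_smul_le univ hr.le hY hYr' (hrow e he)
  · have hw (f) (hf : intensity μ f / k ≠ 0) : intensity μ f ≠ 0 := (div_ne_zero_iff.1 hf).1
    rw [← Matrix.le_iff]
    refine sum_smul_mul_self_le univ hr.le hY hYr'
      (fun f _ => div_nonneg (intensity_nonneg hμ0 f) k.cast_nonneg)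
      ((sum_nonneg fun i _ => abs_nonneg _).trans (hrow e he))
      (fun f _ hf => hrow f (hw f hf)) (fun i _ => ?_) (fun f _ hf => hZδ f (hw f hf))
    simpa only [div_mul_eq_mul_div, ← sum_div, ← mul_div_assoc] using
      div_le_div_of_nonneg_right (sum_intensity_mul_abs_deltaPP_le hμ0 hμ1 hind i) k.cast_nonneg

/-- **Martingale increment bounds.** -/
theorem martingale_increment_bounds
    {m d : ℕ} (μ : Finset (Fin m) → ℝ) (hμ0 : ∀ F, 0 ≤ μ F) (hμ1 : ∑ F, μ F = 1)
    (k : ℕ) (hk : 1 ≤ k) (hhom : IsHomogeneous μ k)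
    (dinf : ℝ) (hind : LinftyIndep μ dinf)
    (Y : Fin m → Matrix (Fin d) (Fin d) ℂ) (r : ℝ) (hr : 0 < r)
    (hY0 : ∀ i, (Y i).PosSemidef)
    (hYr : ∀ i, ((r : ℂ) • (1 : Matrix (Fin d) (Fin d) ℂ) - Y i).PosSemidef)
    (e : Fin m) (he : intensity μ e ≠ 0)
    (Z : Fin m → Matrix (Fin d) (Fin d) ℂ)
    (hZ : ∀ f, intensity μ f ≠ 0 →
      Z f = (∑ B : Finset (Fin m), reduced μ ∅ {f} B • (Y f + ∑ i ∈ B, Y i))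
              - ∑ F : Finset (Fin m), μ F • ∑ i ∈ F, Y i) :
    ((r * dinf) • (1 : Matrix (Fin d) (Fin d) ℂ) - matrixAbs (Z e)).PosSemidef ∧
    ((r * dinf ^ 2) • (∑ f : Fin m, (intensity μ f / k) • Y f)
        - ∑ f : Fin m, (intensity μ f / k) • (Z f * Z f)).PosSemidef :=
  martingale_increment_bounds_general μ hμ0 hμ1 k dinf hind Y r hr hY0 hYr e he Z hZ
end

section
/- L-ensemble probability mass function: Let L be an m×m positive semidefinite Hermitian matrix (the likelihood kernel) and K = (I + L)^{-1}L. Then the function μ(F) = det(L_{F,F})/det(L + I), defined on subsets F ⊆ {1,…,m} (with det of the empty matrix equal to 1), is a probability mass function, and the random subset X with law μ is a determinantal point process with correlation kernel K: for every A ⊆ {1,…,m}, Σ_{F ⊇ A} μ(F) = det(K_{A,A}). -/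
open Matrix Finset
open scoped Classical ComplexOrder

/-- Principal submatrix of `A` indexed by the finite set `S`. -/
noncomputable def principalSub {α : Type*} [Fintype α] [DecidableEq α]
    (A : Matrix α α ℂ) (S : Finset α) : Matrix S S ℂ :=
  A.submatrix (fun i => (i : α)) (fun i => (i : α))

/-- `μ` is the law of a determinantal point process with correlation kernel `K`. -/
def IsDPP {α : Type*} [Fintype α] [DecidableEq α]
    (μ : Finset α → ℝ) (K : Matrix α α ℂ) : Prop :=
  ∀ A : Finset α,
    ((∑ F ∈ Finset.univ.filter (fun F => A ⊆ F), μ F : ℝ) : ℂ) = (principalSub K A).det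

lemma det_piecewise_diagonal {α : Type*} [Fintype α] [DecidableEq α]
    (M : Matrix α α ℂ) (d : α → ℂ) (S : Finset α) :
    (Matrix.of (S.piecewise M (Matrix.diagonal d))).det
      = (principalSub M S).det * ∏ i ∈ Sᶜ, d i := by
  classical
  rw [← Matrix.det_submatrix_equiv_self (Equiv.sumCompl (· ∈ S))]
  have hb : (Matrix.of (S.piecewise M (Matrix.diagonal d))).submatrix
        (Equiv.sumCompl (· ∈ S)) (Equiv.sumCompl (· ∈ S))
      = Matrix.fromBlocks (principalSub M S)
          (M.submatrix (fun i : {x // x ∈ S} => (i : α)) (fun j : {x // ¬ x ∈ S} => (j : α)))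
          0 (Matrix.diagonal (fun i : {x // ¬ x ∈ S} => d i)) := by
    ext i j
    cases i with
    | inl i =>
      cases j with
      | inl j =>
        simp [Matrix.submatrix_apply, Finset.piecewise, i.2, principalSub]
      | inr j =>
        simp [Matrix.submatrix_apply, Finset.piecewise, i.2]
    | inr i =>
      cases j with
      | inl j =>
        have hne : (i : α) ≠ (j : α) := fun h => i.2 (h ▸ j.2)
        simp [Matrix.submatrix_apply, Finset.piecewise, i.2,
          Matrix.diagonal_apply_ne _ hne]
      | inr j =>
        by_cases h : i = j
        · subst h; simp [Matrix.submatrix_apply, Finset.piecewise, i.2]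
        · have hne : (i : α) ≠ (j : α) := fun hh => h (Subtype.ext hh)
          simp [Matrix.submatrix_apply, Finset.piecewise, i.2,
            Matrix.diagonal_apply_ne _ hne, Matrix.diagonal_apply_ne _ h]
  rw [hb, Matrix.det_fromBlocks_zero₂₁, Matrix.det_diagonal]
  congr 1
  exact (Finset.prod_subtype Sᶜ (fun x => Finset.mem_compl) d).symm

lemma det_add_diagonal {α : Type*} [Fintype α] [DecidableEq α]
    (M : Matrix α α ℂ) (d : α → ℂ) :
    (M + Matrix.diagonal d).det
      = ∑ S : Finset α, (principalSub M S).det * ∏ i ∈ Sᶜ, d i := by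
  classical
  have h := (Matrix.detRowAlternating (R := ℂ) (n := α)).toMultilinearMap.map_add_univ
    M (Matrix.diagonal d)
  have h1 : (M + Matrix.diagonal d).det
      = ∑ S : Finset α, (Matrix.of (S.piecewise M (Matrix.diagonal d))).det := h
  rw [h1]
  exact Finset.sum_congr rfl fun S _ => det_piecewise_diagonal M d S

lemma det_add_diagonal_indicator {α : Type*} [Fintype α] [DecidableEq α]
    (M : Matrix α α ℂ) (A : Finset α) :
    (M + Matrix.diagonal (fun i => if i ∈ A then (0:ℂ) else 1)).det
      = ∑ F ∈ Finset.univ.filter (fun F => A ⊆ F), (principalSub M F).det := by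
  classical
  rw [det_add_diagonal]
  rw [Finset.sum_filter]
  refine Finset.sum_congr rfl fun F _ => ?_
  by_cases h : A ⊆ F
  · rw [if_pos h]
    have : ∀ i ∈ Fᶜ, (if i ∈ A then (0:ℂ) else 1) = 1 := by
      intro i hi
      rw [if_neg fun hiA => (Finset.mem_compl.mp hi) (h hiA)]
    rw [Finset.prod_congr rfl this, Finset.prod_const_one, mul_one]
  · rw [if_neg h]
    obtain ⟨a, haA, haF⟩ := Finset.not_subset.mp h
    have : ∏ i ∈ Fᶜ, (if i ∈ A then (0:ℂ) else 1) = 0 :=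
      Finset.prod_eq_zero (Finset.mem_compl.mpr haF) (by simp [haA])
    rw [this, mul_zero]

lemma det_one_sub_mul_indicator {α : Type*} [Fintype α] [DecidableEq α]
    (C : Matrix α α ℂ) (A : Finset α) :
    (1 - C * Matrix.diagonal (fun i => if i ∈ A then (1:ℂ) else 0)).det
      = (principalSub (1 - C) A).det := by
  classical
  rw [← Matrix.det_submatrix_equiv_self (Equiv.sumCompl (· ∈ A))]
  have hb : (1 - C * Matrix.diagonal (fun i => if i ∈ A then (1:ℂ) else 0)).submatrix
        (Equiv.sumCompl (· ∈ A)) (Equiv.sumCompl (· ∈ A))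
      = Matrix.fromBlocks (principalSub (1 - C) A) 0
          (((1 - C * Matrix.diagonal (fun i => if i ∈ A then (1:ℂ) else 0))).submatrix
            (fun i : {x // ¬ x ∈ A} => (i : α)) (fun j : {x // x ∈ A} => (j : α)))
          1 := by
    ext i j
    cases i with
    | inl i =>
      cases j with
      | inl j =>
        simp [Matrix.submatrix_apply, Matrix.sub_apply, Matrix.mul_diagonal, j.2,
          principalSub]
      | inr j =>
        have hne : (i : α) ≠ (j : α) := fun h => j.2 (h ▸ i.2)
        simp [Matrix.submatrix_apply, Matrix.sub_apply, Matrix.mul_diagonal, j.2,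
          Matrix.one_apply_ne hne]
    | inr i =>
      cases j with
      | inl j =>
        simp [Matrix.submatrix_apply]
      | inr j =>
        by_cases h : i = j
        · subst h
          simp [Matrix.submatrix_apply, Matrix.sub_apply, Matrix.mul_diagonal, i.2]
        · have hne : (i : α) ≠ (j : α) := fun hh => h (Subtype.ext hh)
          simp [Matrix.submatrix_apply, Matrix.sub_apply, Matrix.mul_diagonal, j.2,
            Matrix.one_apply_ne hne, Matrix.one_apply_ne h]
  rw [hb, Matrix.det_fromBlocks_zero₁₂, Matrix.det_one, mul_one]

lemma posSemidef_det_nonneg {n : Type*} [Fintype n] [DecidableEq n]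
    {A : Matrix n n ℂ} (hA : A.PosSemidef) : 0 ≤ A.det := by
  rw [hA.isHermitian.det_eq_prod_eigenvalues]
  have h : (0:ℝ) ≤ ∏ i, hA.isHermitian.eigenvalues i :=
    Finset.prod_nonneg fun i _ => hA.eigenvalues_nonneg i
  calc (0:ℂ) = ((0:ℝ):ℂ) := by norm_num
    _ ≤ ((∏ i, hA.isHermitian.eigenvalues i : ℝ) : ℂ) := by
        rw [Complex.real_le_real]; exact h
    _ = ∏ i, (hA.isHermitian.eigenvalues i : ℂ) := by push_cast; rfl

/-- **L-ensemble probability mass function.** The function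
`μ(F) = det(L_{F,F}) / det(L + I)` is a probability mass function, and the corresponding
random subset is a determinantal point process with correlation kernel
`K = (I + L)⁻¹ L`. -/
theorem l_ensemble_pmf
    {m : ℕ} (L : Matrix (Fin m) (Fin m) ℂ) (hL : L.PosSemidef)
    (K : Matrix (Fin m) (Fin m) ℂ) (hK : K = (1 + L)⁻¹ * L)
    (μ : Finset (Fin m) → ℝ)
    (hμ : ∀ F, μ F = ((principalSub L F).det / (L + 1).det).re) :
    (∀ F, 0 ≤ μ F) ∧ (∑ F, μ F = 1) ∧ IsDPP μ K := by
  classical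
  have hpd : (1 + L).PosDef := Matrix.PosDef.one.add_posSemidef hL
  have hdetpos : (0:ℂ) < (1 + L).det := hpd.det_pos
  have hdet1 : (L + 1).det = (1 + L).det := by rw [add_comm]
  set r : ℝ := (1 + L).det.re with hr
  have him : (1 + L).det.im = 0 := (Complex.nonneg_iff.mp hdetpos.le).2.symm
  have hrC : ((r : ℂ)) = (1 + L).det := Complex.ext (by simp [hr]) (by simp [him])
  have hrpos : 0 < r := by simpa using (Complex.lt_def.mp hdetpos).1
  -- per-subset facts
  have hsubdet : ∀ F : Finset (Fin m), (0:ℂ) ≤ (principalSub L F).det :=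
    fun F => posSemidef_det_nonneg (hL.submatrix _)
  have hquot : ∀ F : Finset (Fin m),
      (principalSub L F).det / (L + 1).det
        = ((((principalSub L F).det.re / r : ℝ)) : ℂ) := by
    intro F
    have h1 : (principalSub L F).det = (((principalSub L F).det.re : ℝ) : ℂ) :=
      Complex.ext (by simp) (by simp [(Complex.nonneg_iff.mp (hsubdet F)).2.symm])
    rw [hdet1, ← hrC, Complex.ofReal_div, ← h1]
  have hnonneg : ∀ F, 0 ≤ μ F := by
    intro F
    rw [hμ F, hquot F, Complex.ofReal_re]
    exact div_nonneg (Complex.nonneg_iff.mp (hsubdet F)).1 hrpos.le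
  have hdetne : (1 + L).det ≠ 0 := hdetpos.ne'
  have hmul : (1 + L) * (1 + L)⁻¹ = 1 := Matrix.mul_nonsing_inv _ hdetne.isUnit
  have hmul' : (1 + L)⁻¹ * (1 + L) = 1 := Matrix.nonsing_inv_mul _ hdetne.isUnit
  have hKform : K = 1 - (1 + L)⁻¹ := by
    rw [hK, eq_sub_iff_add_eq]
    have h2 : (1 + L)⁻¹ * L + (1 + L)⁻¹ = (1 + L)⁻¹ * (L + 1) := by
      rw [Matrix.mul_add, Matrix.mul_one]
    rw [h2, add_comm L 1, hmul']
  have hdpp : IsDPP μ K := by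
    intro A
    set P := Matrix.diagonal (fun i => if i ∈ A then (1:ℂ) else 0) with hP
    have hDP : Matrix.diagonal (fun i => if i ∈ A then (0:ℂ) else 1) = 1 - P := by
      ext i j
      by_cases h : i = j
      · subst h; by_cases hA : i ∈ A <;> simp [hP, Matrix.sub_apply, hA]
      · simp [hP, Matrix.sub_apply, Matrix.diagonal_apply_ne _ h, Matrix.one_apply_ne h]
    have hfac : L + Matrix.diagonal (fun i => if i ∈ A then (0:ℂ) else 1)
        = (1 + L) * (1 - (1 + L)⁻¹ * P) := by
      rw [Matrix.mul_sub, Matrix.mul_one, ← Matrix.mul_assoc, hmul, Matrix.one_mul, hDP]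
      abel
    have hsum : (∑ F ∈ Finset.univ.filter (fun F => A ⊆ F), (principalSub L F).det)
        = (1 + L).det * (principalSub K A).det := by
      rw [← det_add_diagonal_indicator L A, hfac, Matrix.det_mul,
        det_one_sub_mul_indicator, ← hKform]
    have hcast : ((∑ F ∈ Finset.univ.filter (fun F => A ⊆ F), μ F : ℝ) : ℂ)
        = ∑ F ∈ Finset.univ.filter (fun F => A ⊆ F),
            (principalSub L F).det / (L + 1).det := by
      push_cast
      refine Finset.sum_congr rfl fun F _ => ?_
      rw [hμ F, hquot F, Complex.ofReal_re, ← hquot F]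
    rw [hcast, ← Finset.sum_div, hsum, hdet1, mul_comm ((1 + L).det), mul_div_assoc, div_self hdetne, mul_one]
  have hsum1 : ∑ F, μ F = 1 := by
    have h := hdpp ∅
    have hfil : Finset.univ.filter (fun F => (∅ : Finset (Fin m)) ⊆ F) = Finset.univ := by
      simp
    rw [hfil] at h
    haveI : IsEmpty {x // x ∈ (∅ : Finset (Fin m))} := Finset.isEmpty_coe_sort.mpr rfl
    rw [Matrix.det_isEmpty] at h
    exact_mod_cast h
  exact ⟨hnonneg, hsum1, hdpp⟩
end
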